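/- arXiv:1509.00618 — 4 statements merged into one kernel-verified Lean document; each statement's English description precedes it below -/
import Mathlib

section
/- For any finite subset ξ of the set of order-preserving injections [j] ↪ [n] with j > 0, the even and odd faces of the lifted set ξ∨ satisfy: if j is even, (ξ∨)⁺ = (ξ⁺)∨ and (ξ∨)⁻ = (ξ⁻)∨ ∪ ξ; if j is odd, (ξ∨)⁺ = (ξ⁺)∨ ∪ ξ and (ξ∨)⁻ = (ξ⁻)∨. -/
/-- `Simplex n j` is the set `[n]_j` of order-preserving injections `[j] ↪ [n]`. -/
abbrev Simplex (n j : ℕ) := Fin (j+1) ↪o Fin (n+1)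

/-- The `k`-th face `a ∘ δ_k` of `a ∈ [n]_{j+1}`. -/
def face {n j : ℕ} (a : Simplex n (j+1)) (k : Fin (j+2)) : Simplex n j :=
  (Fin.succAboveOrderEmb k).trans a

/-- The even faces `a⁺` of `a`. -/
def posFaces {n j : ℕ} (a : Simplex n (j+1)) : Set (Simplex n j) :=
  {b | ∃ k : Fin (j+2), Even (k : ℕ) ∧ b = face a k}

/-- The odd faces `a⁻` of `a`. -/
def negFaces {n j : ℕ} (a : Simplex n (j+1)) : Set (Simplex n j) :=
  {b | ∃ k : Fin (j+2), Odd (k : ℕ) ∧ b = face a k}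

def setPos {n j : ℕ} (ξ : Set (Simplex n (j+1))) : Set (Simplex n j) := ⋃ a ∈ ξ, posFaces a
def setNeg {n j : ℕ} (ξ : Set (Simplex n (j+1))) : Set (Simplex n j) := ⋃ a ∈ ξ, negFaces a

/-- The inclusion `[n]_j ⊆ [n+1]_j`. -/
def liftS {n j : ℕ} (a : Simplex n j) : Simplex (n+1) j :=
  a.trans (OrderEmbedding.ofStrictMono Fin.castSucc Fin.strictMono_castSucc)

/-- `a∨ ∈ [n+1]_{j+1}`: append the new top element `n+1` to `a ∈ [n]_j`. -/
def vee {n j : ℕ} (a : Simplex n j) : Simplex (n+1) (j+1) :=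
  OrderEmbedding.ofStrictMono (Fin.snoc (fun i => (a i).castSucc) (Fin.last (n+1))) (by
    intro i k h
    rcases Fin.eq_castSucc_or_eq_last k with ⟨k', rfl⟩ | rfl
    · rcases Fin.eq_castSucc_or_eq_last i with ⟨i', rfl⟩ | rfl
      · simpa only [Fin.snoc_castSucc] using
          Fin.castSucc_lt_castSucc_iff.mpr (a.strictMono (Fin.castSucc_lt_castSucc_iff.mp h))
      · exact absurd (lt_trans h (Fin.castSucc_lt_last k')) (lt_irrefl _)
    · rcases Fin.eq_castSucc_or_eq_last i with ⟨i', rfl⟩ | rfl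
      · simp only [Fin.snoc_castSucc, Fin.snoc_last]
        exact Fin.castSucc_lt_last _
      · exact absurd h (lt_irrefl _))

/-- A subset of `[n]_{j+1}` is well-formed if distinct elements share no even face
and no odd face. -/
def WellFormed {n j : ℕ} (ξ : Set (Simplex n (j+1))) : Prop :=
  ∀ a ∈ ξ, ∀ b ∈ ξ, a ≠ b →
    posFaces a ∩ posFaces b = ∅ ∧ negFaces a ∩ negFaces b = ∅

/-- `ξ` moves `μ` to `π`. -/
def Moves {n j : ℕ} (ξ : Set (Simplex n (j+1))) (μ π : Set (Simplex n j)) : Prop :=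
  π = (μ ∪ setPos ξ) \ setNeg ξ ∧ μ = (π ∪ setNeg ξ) \ setPos ξ

/-!
Dropping the new top vertex `n+1` from `a∨` gives `a` itself (viewed in `[n+1]_j`), while
dropping any other vertex `k ≤ j+1` gives `(a ∘ δ_k)∨`. The top vertex of `a∨` has index
`j+2`, so `a` is an even face of `a∨` exactly when `j` is even, and an odd one otherwise.
-/

namespace Simplex

variable {n j : ℕ}

/-- `posFaces` and `negFaces` are `facesOf Even` and `facesOf Odd` by definition. -/
def facesOf (P : ℕ → Prop) (a : Simplex n (j+1)) : Set (Simplex n j) :=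
  {b | ∃ k : Fin (j+2), P k ∧ b = face a k}

lemma vee_castSucc (a : Simplex n j) (i : Fin (j+1)) : vee a i.castSucc = (a i).castSucc :=
  Fin.snoc_castSucc (α := fun _ => Fin (n+2)) (Fin.last (n+1)) (fun i => (a i).castSucc) i

lemma vee_last (a : Simplex n j) : vee a (Fin.last (j+1)) = Fin.last (n+1) :=
  Fin.snoc_last (α := fun _ => Fin (n+2)) (Fin.last (n+1)) (fun i => (a i).castSucc)

lemma face_vee_castSucc (a : Simplex n (j+1)) (k : Fin (j+2)) :
    face (vee a) k.castSucc = vee (face a k) := by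
  ext i
  rcases Fin.eq_castSucc_or_eq_last i with ⟨i, rfl⟩ | rfl
  · simp [face, vee_castSucc, Fin.castSucc_succAbove_castSucc]
  · rw [face, RelEmbedding.trans_apply, Fin.succAboveOrderEmb_apply,
      Fin.succAbove_castSucc_of_le k _ (Fin.le_last k), Fin.succ_last, vee_last, vee_last]

lemma face_vee_last (a : Simplex n (j+1)) : face (vee a) (Fin.last (j+2)) = liftS a := by
  ext i
  simp [face, liftS, vee_castSucc]

lemma facesOf_vee (P : ℕ → Prop) (a : Simplex n (j+1)) :
    facesOf P (vee a) = vee '' facesOf P a ∪ {b | P (j+2) ∧ b = liftS a} := by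
  ext b
  simp only [facesOf, Set.mem_union, Set.mem_image, Set.mem_ofPred_eq]
  constructor
  · rintro ⟨k, hk, rfl⟩
    rcases Fin.eq_castSucc_or_eq_last k with ⟨k, rfl⟩ | rfl
    · exact .inl ⟨face a k, ⟨k, hk, rfl⟩, (face_vee_castSucc a k).symm⟩
    · exact .inr ⟨hk, face_vee_last a⟩
  · rintro (⟨_, ⟨k, hk, rfl⟩, rfl⟩ | ⟨hP, rfl⟩)
    · exact ⟨k.castSucc, hk, (face_vee_castSucc a k).symm⟩
    · exact ⟨Fin.last (j+2), hP, (face_vee_last a).symm⟩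

lemma biUnion_facesOf_vee_image (P : ℕ → Prop) (ξ : Set (Simplex n (j+1))) :
    ⋃ a ∈ vee '' ξ, facesOf P a =
      vee '' (⋃ a ∈ ξ, facesOf P a) ∪ ⋃ a ∈ ξ, {b | P (j+2) ∧ b = liftS a} := by
  simp only [Set.biUnion_image, facesOf_vee, Set.iUnion_union_distrib, Set.image_iUnion₂]

lemma biUnion_facesOf_vee_image_of_not (P : ℕ → Prop) (hP : ¬ P (j+2))
    (ξ : Set (Simplex n (j+1))) :
    ⋃ a ∈ vee '' ξ, facesOf P a = vee '' ⋃ a ∈ ξ, facesOf P a := by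
  rw [biUnion_facesOf_vee_image]
  simp [hP]

lemma biUnion_facesOf_vee_image_of (P : ℕ → Prop) (hP : P (j+2))
    (ξ : Set (Simplex n (j+1))) :
    ⋃ a ∈ vee '' ξ, facesOf P a = vee '' (⋃ a ∈ ξ, facesOf P a) ∪ liftS '' ξ := by
  rw [biUnion_facesOf_vee_image, Set.image_eq_iUnion liftS ξ]
  simp [hP]

end Simplex

open Simplex in
theorem vee_faces_general (n j : ℕ) (ξ : Set (Simplex n (j+1))) :
    (Even (j+1) →
      setPos (vee '' ξ) = vee '' (setPos ξ) ∧
      setNeg (vee '' ξ) = vee '' (setNeg ξ) ∪ liftS '' ξ) ∧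
    (Odd (j+1) →
      setPos (vee '' ξ) = vee '' (setPos ξ) ∪ liftS '' ξ ∧
      setNeg (vee '' ξ) = vee '' (setNeg ξ)) := by
  refine ⟨fun hj => ⟨?_, ?_⟩, fun hj => ⟨?_, ?_⟩⟩
  · exact biUnion_facesOf_vee_image_of_not Even (by grind) ξ
  · exact biUnion_facesOf_vee_image_of Odd (by grind) ξ
  · exact biUnion_facesOf_vee_image_of Even (by grind) ξ
  · exact biUnion_facesOf_vee_image_of_not Odd (by grind) ξ

/-- Equation (10) of Buckley–Garner: faces of the lifted set `ξ∨`. -/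
theorem vee_faces (n j : ℕ) (ξ : Set (Simplex n (j+1))) (hfin : ξ.Finite) :
    (Even (j+1) →
      setPos (vee '' ξ) = vee '' (setPos ξ) ∧
      setNeg (vee '' ξ) = vee '' (setNeg ξ) ∪ liftS '' ξ) ∧
    (Odd (j+1) →
      setPos (vee '' ξ) = vee '' (setPos ξ) ∪ liftS '' ξ ∧
      setNeg (vee '' ξ) = vee '' (setNeg ξ)) :=
  vee_faces_general n j ξ
end

section
/- Any 1-cell ξ : i → j in the n-th oriental 𝒪(n) is either the empty set with i = j, or takes the form ξ = {(k_0 k_1), (k_1 k_2), ..., (k_{r-1} k_r)} for some chain i = k_0 < k_1 < ... < k_r = j in {0,...,n}. -/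
/-!
Well-formedness says that every vertex is the source of at most one edge of `ξ` and the target of
at most one. The least source of an edge of a nonempty 1-cell `ξ : i → j` is `i`, and removing the
edge `(i, b)` leaves a 1-cell `b → j` with one edge less; induction on the number of edges then
produces the chain `i < b < ⋯ < j`.
-/

/-- The even faces of a set of edges: the set of second entries. -/
def ePos {n : ℕ} (ξ : Set (Fin (n+1) × Fin (n+1))) : Set (Fin (n+1)) := Prod.snd '' ξ

/-- The odd faces of a set of edges: the set of first entries. -/
def eNeg {n : ℕ} (ξ : Set (Fin (n+1) × Fin (n+1))) : Set (Fin (n+1)) := Prod.fst '' ξ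

/-- Well-formedness: distinct edges share no even face and no odd face. -/
def EWf {n : ℕ} (ξ : Set (Fin (n+1) × Fin (n+1))) : Prop :=
  ∀ p ∈ ξ, ∀ q ∈ ξ, p ≠ q → p.2 ≠ q.2 ∧ p.1 ≠ q.1

/-- `ξ` moves `i` to `j`. -/
def EMoves {n : ℕ} (ξ : Set (Fin (n+1) × Fin (n+1))) (i j : Fin (n+1)) : Prop :=
  ({j} : Set (Fin (n+1))) = ({i} ∪ ePos ξ) \ eNeg ξ ∧
  ({i} : Set (Fin (n+1))) = ({j} ∪ eNeg ξ) \ ePos ξ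

/-- `ξ` is a 1-cell `i → j` of the oriental `𝒪(n)`. -/
def IsOneCell {n : ℕ} (ξ : Set (Fin (n+1) × Fin (n+1))) (i j : Fin (n+1)) : Prop :=
  (∀ p ∈ ξ, p.1 < p.2) ∧ EWf ξ ∧ EMoves ξ i j

def chainEdges {α : Type*} {r : ℕ} (k : Fin (r+1) → α) : Set (α × α) :=
  Set.range fun t : Fin r => (k t.castSucc, k t.succ)

lemma chainEdges_cons {α : Type*} {r : ℕ} (a : α) (k : Fin (r+1) → α) :
    chainEdges (Fin.cons a k : Fin (r+2) → α) = insert (a, k 0) (chainEdges k) := by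
  set c : Fin (r+2) → α := Fin.cons a k
  have : (fun t : Fin (r+1) => (c t.castSucc, c t.succ))
      = (Fin.cons (a, k 0) fun t : Fin r => (k t.castSucc, k t.succ) : Fin (r+1) → α × α) := by
    funext t
    cases t using Fin.cases <;> simp [c]
  rw [chainEdges, this, Fin.range_cons, chainEdges]

section

variable {n : ℕ} {ξ : Set (Fin (n+1) × Fin (n+1))} {i j : Fin (n+1)}

lemma EWf.injOn_snd (h : EWf ξ) : ξ.InjOn Prod.snd :=
  fun p hp q hq hpq => by_contra fun hne => (h p hp q hq hne).1 hpq

lemma EWf.injOn_fst (h : EWf ξ) : ξ.InjOn Prod.fst :=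
  fun p hp q hq hpq => by_contra fun hne => (h p hp q hq hne).2 hpq

lemma ePos_sdiff_singleton (h : EWf ξ) {p : Fin (n+1) × Fin (n+1)} (hp : p ∈ ξ) :
    ePos (ξ \ {p}) = ePos ξ \ {p.2} := by
  rw [ePos, ePos, h.injOn_snd.image_sdiff_subset (Set.singleton_subset_iff.2 hp),
    Set.image_singleton]

lemma eNeg_sdiff_singleton (h : EWf ξ) {p : Fin (n+1) × Fin (n+1)} (hp : p ∈ ξ) :
    eNeg (ξ \ {p}) = eNeg ξ \ {p.1} := by
  rw [eNeg, eNeg, h.injOn_fst.image_sdiff_subset (Set.singleton_subset_iff.2 hp),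
    Set.image_singleton]

lemma eMoves_iff : EMoves ξ i j ↔ ∀ x, (x = j ↔ (x = i ∨ x ∈ ePos ξ) ∧ x ∉ eNeg ξ) ∧
    (x = i ↔ (x = j ∨ x ∈ eNeg ξ) ∧ x ∉ ePos ξ) := by
  simp only [EMoves, Set.ext_iff, Set.mem_singleton_iff, Set.mem_sdiff, Set.mem_union, forall_and]

lemma EMoves.eq_of_empty (h : EMoves ∅ i j) : i = j := by
  simpa [ePos, eNeg, eq_comm] using h.1

end

namespace IsOneCell

variable {n : ℕ} {ξ : Set (Fin (n+1) × Fin (n+1))} {i j : Fin (n+1)}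

/-- The least odd face of `ξ` is the source: were it an even face, the edge ending there would
start lower. -/
lemma exists_mem_of_nonempty (h : IsOneCell ξ i j) (hne : ξ.Nonempty) : ∃ b, (i, b) ∈ ξ := by
  obtain ⟨a, ha, hmin⟩ :=
    Set.exists_min_image (eNeg ξ) id (Set.toFinite _) (hne.image Prod.fst)
  have hai : a = i := by
    refine ((eMoves_iff.1 h.2.2 a).2.2 ⟨.inr ha, ?_⟩)
    rintro ⟨q, hq, rfl⟩
    exact (h.1 q hq).not_ge (hmin q.1 ⟨q, hq, rfl⟩)
  obtain ⟨⟨a', b⟩, hq, rfl : a' = a⟩ := ha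
  exact ⟨b, hai ▸ hq⟩

lemma sdiff_singleton (h : IsOneCell ξ i j) {b : Fin (n+1)} (hb : (i, b) ∈ ξ) :
    IsOneCell (ξ \ {(i, b)}) b j := by
  obtain ⟨hlt, hwf, hmv⟩ := h
  have hib : i < b := hlt _ hb
  refine ⟨fun p hp => hlt p hp.1, fun p hp q hq => hwf p hp.1 q hq.1, ?_⟩
  rw [eMoves_iff] at hmv ⊢
  intro x
  rw [ePos_sdiff_singleton hwf hb, eNeg_sdiff_singleton hwf hb]
  simp only [Set.mem_sdiff, Set.mem_singleton_iff]
  have hbP : b ∈ ePos ξ := ⟨_, hb, rfl⟩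
  have hiN : i ∈ eNeg ξ := ⟨_, hb, rfl⟩
  have := hmv x; have := hmv j; have := hmv b
  grind

theorem exists_chain (h : IsOneCell ξ i j) :
    ∃ (r : ℕ) (k : Fin (r+1) → Fin (n+1)), StrictMono k ∧
      k 0 = i ∧ k (Fin.last r) = j ∧ ξ = chainEdges k := by
  induction hm : ξ.ncard generalizing ξ i with
  | zero =>
    obtain rfl : ξ = ∅ := (Set.ncard_eq_zero (Set.toFinite ξ)).1 hm
    exact ⟨0, fun _ => i, Subsingleton.strictMono (α := Fin 1) _, rfl, h.2.2.eq_of_empty,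
      (Set.range_eq_empty _).symm⟩
  | succ m ih =>
    obtain ⟨b, hb⟩ := h.exists_mem_of_nonempty (Set.nonempty_of_ncard_ne_zero (by omega))
    obtain ⟨r, k, hk, rfl, hkr, hξ⟩ :=
      ih (h.sdiff_singleton hb) (by rw [Set.ncard_sdiff_singleton_of_mem hb, hm]; rfl)
    refine ⟨r + 1, Fin.cons i k, strictMono_vecCons.2 ⟨h.1 _ hb, hk⟩, rfl, hkr, ?_⟩
    rw [chainEdges_cons, ← hξ, Set.insert_sdiff_singleton, Set.insert_eq_of_mem hb]

end IsOneCell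

/-- Classification of 1-cells in the oriental `𝒪(n)`: every 1-cell `ξ : i → j`
is either empty (with `i = j`) or a strictly increasing chain of edges from
`i` to `j`. -/
theorem oriental_one_cell_classification (n : ℕ) (i j : Fin (n+1))
    (ξ : Set (Fin (n+1) × Fin (n+1))) (hcell : IsOneCell ξ i j) :
    (ξ = ∅ ∧ i = j) ∨
    ∃ (r : ℕ) (k : Fin (r+2) → Fin (n+1)), StrictMono k ∧
      k 0 = i ∧ k (Fin.last (r+1)) = j ∧
      ξ = ⋃ t : Fin (r+1), {(k t.castSucc, k t.succ)} := by
  obtain ⟨r, k, hk, rfl, rfl, rfl⟩ := hcell.exists_chain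
  cases r with
  | zero => exact .inl ⟨Set.range_eq_empty _, rfl⟩
  | succ r => exact .inr ⟨r, k, hk, rfl, rfl, (Set.iUnion_singleton_eq_range _).symm⟩
end

section
/- If ξ : x → y and ζ : y → z are 0-composable 1-cells in the oriental 𝒪(n), then ξ and ζ are disjoint as subsets of [n]_1. -/
lemma ePos_le {n : ℕ} {ξ : Set (Fin (n+1) × Fin (n+1))} {x y : Fin (n+1)}
    (hinc : ∀ p ∈ ξ, p.1 < p.2) (hm : EMoves ξ x y) :
    ∀ b ∈ ePos ξ, b ≤ y := by
  intro b hb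
  obtain ⟨h1, -⟩ := hm
  -- strong induction on n + 1 - b.val
  have : ∀ k (b : Fin (n+1)), n + 1 - b.val ≤ k → b ∈ ePos ξ → b ≤ y := by
    intro k
    induction k with
    | zero => intro b hk _; omega
    | succ k ih =>
      intro b hk hb
      by_cases hbn : b ∈ eNeg ξ
      · obtain ⟨p, hp, hp1⟩ := hbn
        have hlt : b < p.2 := hp1 ▸ hinc p hp
        have hc : p.2 ∈ ePos ξ := ⟨p, hp, rfl⟩
        have := ih p.2 (by have := hlt; omega) hc
        exact le_of_lt (lt_of_lt_of_le hlt this)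
      · have : b ∈ ({x} ∪ ePos ξ) \ eNeg ξ := ⟨Or.inr hb, hbn⟩
        rw [← h1] at this
        exact le_of_eq this
  exact this (n + 1) b (by omega) hb

lemma le_eNeg {n : ℕ} {ζ : Set (Fin (n+1) × Fin (n+1))} {y z : Fin (n+1)}
    (hinc : ∀ p ∈ ζ, p.1 < p.2) (hm : EMoves ζ y z) :
    ∀ a ∈ eNeg ζ, y ≤ a := by
  intro a ha
  obtain ⟨-, h2⟩ := hm
  have : ∀ k (a : Fin (n+1)), a.val ≤ k → a ∈ eNeg ζ → y ≤ a := by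
    intro k
    induction k with
    | zero =>
      intro a hk ha
      by_cases hap : a ∈ ePos ζ
      · obtain ⟨p, hp, hp1⟩ := hap
        have := hp1 ▸ hinc p hp
        omega
      · have : a ∈ ({z} ∪ eNeg ζ) \ ePos ζ := ⟨Or.inr ha, hap⟩
        rw [← h2] at this
        exact ge_of_eq this
    | succ k ih =>
      intro a hk ha
      by_cases hap : a ∈ ePos ζ
      · obtain ⟨p, hp, hp1⟩ := hap
        have hlt : p.1 < a := hp1 ▸ hinc p hp
        have hc : p.1 ∈ eNeg ζ := ⟨p, hp, rfl⟩
        have := ih p.1 (by omega) hc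
        exact le_of_lt (lt_of_le_of_lt this hlt)
      · have : a ∈ ({z} ∪ eNeg ζ) \ ePos ζ := ⟨Or.inr ha, hap⟩
        rw [← h2] at this
        exact ge_of_eq this
  exact this a.val a le_rfl ha

/-- Composable 1-cells of the oriental `𝒪(n)` are disjoint. -/
theorem oriental_one_cells_disjoint (n : ℕ) (x y z : Fin (n+1))
    (ξ ζ : Set (Fin (n+1) × Fin (n+1)))
    (hξ : IsOneCell ξ x y) (hζ : IsOneCell ζ y z) :
    ξ ∩ ζ = ∅ := by
  ext p
  simp only [Set.mem_inter_iff, Set.mem_empty_iff_false, iff_false, not_and]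
  intro hpξ hpζ
  have h1 : p.2 ≤ y := ePos_le hξ.1 hξ.2.2 p.2 ⟨p, hpξ, rfl⟩
  have h2 : y ≤ p.1 := le_eNeg hζ.1 hζ.2.2 p.1 ⟨p, hpζ, rfl⟩
  have h3 : p.1 < p.2 := hξ.1 p hpξ
  exact absurd (lt_of_le_of_lt (le_trans h1 h2) h3) (lt_irrefl _)
end

section
/- Let x ⊆ [n]_{j+1} and x̄ ⊆ [n]_{j+2} with j odd. If x̄ ∪ x∨ is well-formed, then both x and x̄ are well-formed. -/
lemma liftS_injective {n j : ℕ} : Function.Injective (liftS (n := n) (j := j)) := by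
  intro a b hab
  ext i
  have h2 : a i = b i := by
    have := DFunLike.congr_fun hab i
    simpa [liftS, Fin.castSucc_inj, OrderEmbedding.ofStrictMono] using this
  exact congrArg Fin.val h2

lemma vee_injective {n j : ℕ} : Function.Injective (vee (n := n) (j := j)) := by
  intro a b hab
  ext i
  have h2 : a i = b i := by
    have := DFunLike.congr_fun hab i.castSucc
    simpa [vee, OrderEmbedding.ofStrictMono, Fin.snoc_castSucc, Fin.castSucc_inj] using this
  exact congrArg Fin.val h2

lemma liftS_face {n j : ℕ} (a : Simplex n (j+1)) (k : Fin (j+2)) :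
    face (liftS a) k = liftS (face a k) := rfl

lemma vee_face {n j : ℕ} (a : Simplex n (j+1)) (k : Fin (j+2)) :
    face (vee a) k.castSucc = vee (face a k) := by
  ext i
  rcases Fin.eq_castSucc_or_eq_last i with ⟨i', rfl⟩ | rfl
  · have h1 : (k.castSucc).succAbove i'.castSucc = (k.succAbove i').castSucc :=
      Fin.castSucc_succAbove_castSucc
    simp only [face, vee, RelEmbedding.trans_apply, Fin.succAboveOrderEmb_apply,
      OrderEmbedding.ofStrictMono, RelEmbedding.coe_mk, Function.Embedding.coeFn_mk, OrderEmbedding.coe_ofStrictMono, OrderEmbedding.coe_ofMapLEIff, Fin.snoc_castSucc, Fin.snoc_last, h1,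
      Fin.snoc_castSucc]
  · have h2 : (k.castSucc).succAbove (Fin.last (j+1)) = Fin.last (j+2) := by
      rw [Fin.succAbove_of_le_castSucc]
      · rfl
      · exact Fin.castSucc_le_castSucc_iff.mpr (Fin.le_last k)
    simp only [face, vee, RelEmbedding.trans_apply, Fin.succAboveOrderEmb_apply,
      OrderEmbedding.ofStrictMono, RelEmbedding.coe_mk, Function.Embedding.coeFn_mk, OrderEmbedding.coe_ofStrictMono, OrderEmbedding.coe_ofMapLEIff, Fin.snoc_castSucc, Fin.snoc_last, h2,
      Fin.snoc_last]

/-- If `x̄ ∪ x∨` is well-formed then so are `x` and `x̄` (for `j` odd). -/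
theorem wf_of_union_wf (n j : ℕ) (hj : Odd j)
    (x : Set (Simplex n (j+1))) (xb : Set (Simplex n (j+2)))
    (h : WellFormed (liftS '' xb ∪ vee '' x)) :
    WellFormed x ∧ WellFormed xb := by
  constructor
  · intro a ha b hb hab
    have hva : vee a ∈ liftS '' xb ∪ vee '' x := Or.inr ⟨a, ha, rfl⟩
    have hvb : vee b ∈ liftS '' xb ∪ vee '' x := Or.inr ⟨b, hb, rfl⟩
    have hne : vee a ≠ vee b := fun e => hab (vee_injective e)
    obtain ⟨hp, hn⟩ := h _ hva _ hvb hne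
    constructor
    · ext c
      simp only [Set.mem_inter_iff, Set.mem_empty_iff_false, iff_false, not_and]
      rintro ⟨k, hk, rfl⟩ ⟨l, hl, hcl⟩
      have : vee (face a k) ∈ posFaces (vee a) ∩ posFaces (vee b) := by
        constructor
        · exact ⟨k.castSucc, by simpa using hk, (vee_face a k).symm⟩
        · exact ⟨l.castSucc, by simpa using hl, by rw [vee_face, ← hcl]⟩
      rw [hp] at this
      exact this
    · ext c
      simp only [Set.mem_inter_iff, Set.mem_empty_iff_false, iff_false, not_and]
      rintro ⟨k, hk, rfl⟩ ⟨l, hl, hcl⟩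
      have : vee (face a k) ∈ negFaces (vee a) ∩ negFaces (vee b) := by
        constructor
        · exact ⟨k.castSucc, by simpa using hk, (vee_face a k).symm⟩
        · exact ⟨l.castSucc, by simpa using hl, by rw [vee_face, ← hcl]⟩
      rw [hn] at this
      exact this
  · intro a ha b hb hab
    have hva : liftS a ∈ liftS '' xb ∪ vee '' x := Or.inl ⟨a, ha, rfl⟩
    have hvb : liftS b ∈ liftS '' xb ∪ vee '' x := Or.inl ⟨b, hb, rfl⟩
    have hne : liftS a ≠ liftS b := fun e => hab (liftS_injective e)
    obtain ⟨hp, hn⟩ := h _ hva _ hvb hne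
    constructor
    · ext c
      simp only [Set.mem_inter_iff, Set.mem_empty_iff_false, iff_false, not_and]
      rintro ⟨k, hk, rfl⟩ ⟨l, hl, hcl⟩
      have : liftS (face a k) ∈ posFaces (liftS a) ∩ posFaces (liftS b) :=
        ⟨⟨k, hk, (liftS_face a k).symm⟩, ⟨l, hl, by rw [liftS_face, ← hcl]⟩⟩
      rw [hp] at this
      exact this
    · ext c
      simp only [Set.mem_inter_iff, Set.mem_empty_iff_false, iff_false, not_and]
      rintro ⟨k, hk, rfl⟩ ⟨l, hl, hcl⟩
      have : liftS (face a k) ∈ negFaces (liftS a) ∩ negFaces (liftS b) :=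
        ⟨⟨k, hk, (liftS_face a k).symm⟩, ⟨l, hl, by rw [liftS_face, ← hcl]⟩⟩
      rw [hn] at this
      exact this
end
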